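/- With a_n = ⌊log n / log 2⌋, b_n = ⌊log n / log 2⌋ + 2{n/2}, and c_n = d_n = ⌊n/2⌋ − ⌊log n / log 2⌋, one has log C(n; a_n, b_n, c_n, d_n) = n log 2 + 2 log² n / log 2 + o(log² n) as n → ∞. -/

import Mathlib

/-- `a_n = ⌊log n / log 2⌋` (integer part; `log` is the natural logarithm). -/
noncomputable def aSeq (n : ℕ) : ℕ := ⌊Real.log n / Real.log 2⌋₊

/-- `b_n = ⌊log n / log 2⌋ + 2{n/2}`, where `2{n/2}` is `0` if `n` is even and `1` if odd. -/
noncomputable def bSeq (n : ℕ) : ℕ := aSeq n + n % 2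

/-- `c_n = d_n = ⌊n/2⌋ − ⌊log n / log 2⌋`. -/
noncomputable def cSeq (n : ℕ) : ℕ := n / 2 - aSeq n

/-- The multinomial coefficient `C(n; a_n, b_n, c_n, d_n) = n!/(a_n! b_n! c_n! d_n!)`
(the subtraction `c_n = ⌊n/2⌋ − a_n` is exact and `a_n + b_n + c_n + d_n = n`). -/
noncomputable def multinomialSeq (n : ℕ) : ℝ :=
  (n.factorial : ℝ) /
    ((aSeq n).factorial * (bSeq n).factorial * (cSeq n).factorial * (cSeq n).factorial)

/-- The singled-out term
`t_n = C(n; a_n,b_n,c_n,d_n) (1/2)^{a_n+c_n} (1/2)^{b_n+d_n} (1/2)^{a_n b_n}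
       (1 − 2^{−a_n})^{d_n} (1 − 2^{−b_n})^{c_n}` with `d_n = c_n`. -/
noncomputable def tSeq (n : ℕ) : ℝ :=
  multinomialSeq n *
    ((1 / 2 : ℝ) ^ (aSeq n + cSeq n) * (1 / 2 : ℝ) ^ (bSeq n + cSeq n) *
      (1 / 2 : ℝ) ^ (aSeq n * bSeq n) *
      (1 - (2 : ℝ) ^ (-(aSeq n : ℤ))) ^ cSeq n *
      (1 - (2 : ℝ) ^ (-(bSeq n : ℤ))) ^ cSeq n)

/-! With `k = a + b = n - 2c`, the multinomial coefficient factors as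
`n (n-1) ⋯ (n-k+1) · C(2c, c) / (a! b!)`. Since `k = O(log n)` and `2c ≥ n/2`, the falling
factorial is `n^k` up to a factor `2^k`, the central binomial coefficient is `4^c` up to a factor
`2c`, and `log a! ≤ a log a = o(log² n)`. Hence `log C = n log 2 + k (log n - log 2) + O(log n)
+ o(log² n)`, and `k = 2 log n / log 2 + O(1)` gives the claim. -/

open Filter Asymptotics Real
open scoped Nat

theorem log_factorial_le_mul_log (k : ℕ) : log (k ! : ℝ) ≤ k * log k := by
  rw [← log_pow]
  exact log_le_log (by positivity) (mod_cast k.factorial_le_pow)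

theorem log_descFactorial_le (n k : ℕ) : log (n.descFactorial k : ℝ) ≤ k * log n := by
  rcases (n.descFactorial k).eq_zero_or_pos with h | h
  · simpa [h] using mul_nonneg k.cast_nonneg (log_natCast_nonneg n)
  · rw [← log_pow]
    exact log_le_log (mod_cast h) (mod_cast n.descFactorial_le_pow k)

theorem mul_log_add_one_le_log_descFactorial (m k : ℕ) :
    k * log (m + 1) ≤ log ((m + k).descFactorial k : ℝ) := by
  have h := (m + k).pow_sub_le_descFactorial k
  rw [show m + k + 1 - k = m + 1 by omega] at h
  rw [← log_pow]
  exact log_le_log (by positivity) (mod_cast h)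

theorem log_centralBinom_le (c : ℕ) : log (c.centralBinom : ℝ) ≤ 2 * c * log 2 := by
  have h : (c.centralBinom : ℝ) ≤ 2 ^ (2 * c) := by
    rw [pow_mul]; exact_mod_cast c.centralBinom_le_four_pow
  calc log (c.centralBinom : ℝ) ≤ log (2 ^ (2 * c)) :=
        log_le_log (mod_cast c.centralBinom_pos) h
    _ = 2 * c * log 2 := by push_cast [log_pow]; ring

theorem le_log_centralBinom {c : ℕ} (hc : 0 < c) :
    2 * c * log 2 - log (2 * c) ≤ log (c.centralBinom : ℝ) := by
  have h : (2 : ℝ) ^ (2 * c) ≤ 2 * c * c.centralBinom := by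
    rw [pow_mul]; exact_mod_cast c.four_pow_le_two_mul_self_mul_centralBinom hc
  have h2c : (0 : ℝ) < 2 * c := by positivity
  have := log_le_log (by positivity) h
  rw [log_pow, log_mul h2c.ne' (mod_cast c.centralBinom_ne_zero)] at this
  push_cast at this
  linarith

section MultinomialBounds

variable {a b c n : ℕ}

theorem factorial_div_eq_descFactorial_mul_centralBinom (h : a + b + 2 * c = n) :
    (n ! : ℝ) / (a ! * b ! * c ! * c !) =
      n.descFactorial (a + b) * c.centralBinom / (a ! * b !) := by
  have hn : (2 * c)! * n.descFactorial (a + b) = n ! := by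
    rw [← Nat.factorial_mul_descFactorial (show a + b ≤ n by omega),
      show n - (a + b) = 2 * c by omega]
  have hc : c.centralBinom * c ! * c ! = (2 * c)! := by
    have := Nat.choose_mul_factorial_mul_factorial (show c ≤ 2 * c by omega)
    rwa [show 2 * c - c = c by omega] at this
  rw [← hn, ← hc]
  push_cast
  field_simp

theorem log_factorial_div_eq (h : a + b + 2 * c = n) :
    log ((n ! : ℝ) / (a ! * b ! * c ! * c !)) =
      log (n.descFactorial (a + b) : ℝ) + log (c.centralBinom : ℝ) - log (a ! : ℝ) -
        log (b ! : ℝ) := by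
  have hd : (n.descFactorial (a + b) : ℝ) ≠ 0 :=
    mod_cast (Nat.descFactorial_pos.2 (by omega)).ne'
  have hcb : (c.centralBinom : ℝ) ≠ 0 := mod_cast c.centralBinom_ne_zero
  rw [factorial_div_eq_descFactorial_mul_centralBinom h,
    log_div (mul_ne_zero hd hcb) (by positivity), log_mul hd hcb,
    log_mul (by positivity) (by positivity)]
  ring

theorem log_factorial_div_le (h : a + b + 2 * c = n) :
    log ((n ! : ℝ) / (a ! * b ! * c ! * c !)) ≤ (a + b) * log n + 2 * c * log 2 := by
  rw [log_factorial_div_eq h]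
  have := log_descFactorial_le n (a + b)
  have := log_centralBinom_le c
  have := log_nonneg (Nat.one_le_cast.2 a.factorial_pos : (1 : ℝ) ≤ a !)
  have := log_nonneg (Nat.one_le_cast.2 b.factorial_pos : (1 : ℝ) ≤ b !)
  push_cast at *
  linarith

theorem le_log_factorial_div (h : a + b + 2 * c = n) (hc : 0 < c) :
    (a + b) * log (2 * c + 1) + 2 * c * log 2 - log (2 * c) - a * log a - b * log b ≤
      log ((n ! : ℝ) / (a ! * b ! * c ! * c !)) := by
  rw [log_factorial_div_eq h]
  have := mul_log_add_one_le_log_descFactorial (2 * c) (a + b)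
  rw [show 2 * c + (a + b) = n by omega] at this
  have := le_log_centralBinom hc
  have := log_factorial_le_mul_log a
  have := log_factorial_le_mul_log b
  push_cast at *
  linarith

end MultinomialBounds

theorem Asymptotics.IsBigO.isLittleO_mul_log_sq {α : Type*} {l : Filter α} {s f : α → ℝ}
    (hsf : s =O[l] f) (hs : Tendsto s l atTop) :
    (fun x => s x * log (s x)) =o[l] fun x => f x ^ 2 := by
  have h : (fun x : ℝ => x * log x) =o[atTop] fun x => x ^ 2 :=
    ((isBigO_refl id atTop).mul_isLittleO isLittleO_log_id_atTop).congr_right fun x => (sq x).symm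
  exact (h.comp_tendsto hs).trans_isBigO (hsf.pow 2)

theorem Nat.four_mul_add_two_le_two_pow {k : ℕ} (hk : 5 ≤ k) : 4 * k + 2 ≤ 2 ^ k := by
  induction k, hk using Nat.le_induction with
  | base => norm_num
  | succ k _ ih => rw [pow_succ]; omega

theorem aSeq_eq_log (n : ℕ) : aSeq n = Nat.log 2 n := by
  rw [aSeq, log_div_log, ← Real.natFloor_logb_natCast, Nat.cast_ofNat]

theorem aSeq_le_log_div_log (n : ℕ) : (aSeq n : ℝ) ≤ log n / log 2 :=
  Nat.floor_le (div_nonneg (log_natCast_nonneg n) (log_nonneg one_le_two))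

theorem log_div_log_lt_aSeq_add_one (n : ℕ) : log n / log 2 < aSeq n + 1 :=
  Nat.lt_floor_add_one _

theorem tendsto_aSeq : Tendsto aSeq atTop atTop :=
  tendsto_nat_floor_atTop.comp
    ((tendsto_log_atTop.comp tendsto_natCast_atTop_atTop).atTop_div_const (log_pos one_lt_two))

theorem eventually_four_mul_aSeq_add_two_le : ∀ᶠ n in atTop, 4 * aSeq n + 2 ≤ n := by
  filter_upwards [tendsto_aSeq.eventually_ge_atTop 5, eventually_ne_atTop 0] with n ha hn
  calc 4 * aSeq n + 2 ≤ 2 ^ aSeq n := Nat.four_mul_add_two_le_two_pow ha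
    _ ≤ n := by rw [aSeq_eq_log]; exact Nat.pow_log_le_self 2 hn

theorem isBigO_aSeq : (fun n => (aSeq n : ℝ)) =O[atTop] fun n => log n := by
  refine IsBigO.of_bound (log 2)⁻¹ (Eventually.of_forall fun n => ?_)
  rw [norm_of_nonneg (Nat.cast_nonneg _), norm_of_nonneg (log_natCast_nonneg n), inv_mul_eq_div]
  exact aSeq_le_log_div_log n

theorem isBigO_bSeq : (fun n => (bSeq n : ℝ)) =O[atTop] fun n => log n := by
  refine IsBigO.trans (IsBigO.of_bound 2 ?_) isBigO_aSeq
  filter_upwards [tendsto_aSeq.eventually_ge_atTop 1] with n ha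
  rw [norm_of_nonneg (Nat.cast_nonneg _), norm_of_nonneg (Nat.cast_nonneg _)]
  exact_mod_cast (show bSeq n ≤ 2 * aSeq n by unfold bSeq; omega)

theorem tendsto_bSeq : Tendsto bSeq atTop atTop :=
  tendsto_atTop_mono (fun _ => Nat.le_add_right _ _) tendsto_aSeq

theorem abs_aSeq_add_bSeq_sub_le (n : ℕ) :
    |(aSeq n + bSeq n : ℝ) - 2 * (log n / log 2)| ≤ 2 := by
  have ha := aSeq_le_log_div_log n
  have ha' := log_div_log_lt_aSeq_add_one n
  have hb : (bSeq n : ℝ) = aSeq n + (n % 2 : ℕ) := by rw [bSeq, Nat.cast_add]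
  have hr : ((n % 2 : ℕ) : ℝ) ≤ 1 := mod_cast Nat.le_of_lt_succ (n.mod_lt two_pos)
  rw [abs_le, hb]
  constructor <;> linarith [Nat.cast_nonneg (α := ℝ) (n % 2)]

theorem log_multinomialSeq_bounds : ∀ᶠ n in atTop,
    n * log 2 + (aSeq n + bSeq n) * (log n - 2 * log 2) - log n - aSeq n * log (aSeq n) -
        bSeq n * log (bSeq n) ≤ log (multinomialSeq n) ∧
      log (multinomialSeq n) ≤ n * log 2 + (aSeq n + bSeq n) * (log n - log 2) := by
  filter_upwards [eventually_four_mul_aSeq_add_two_le] with n hn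
  have hsum : aSeq n + bSeq n + 2 * cSeq n = n := by unfold bSeq cSeq; omega
  have hsumR : (aSeq n : ℝ) + bSeq n + 2 * cSeq n = n := mod_cast hsum
  have hc : 0 < cSeq n := by unfold cSeq; omega
  have upper := log_factorial_div_le hsum
  have lower := le_log_factorial_div hsum hc
  rw [← multinomialSeq] at upper lower
  have hlog_c1 : log n - log 2 ≤ log (2 * cSeq n + 1) := by
    rw [sub_le_iff_le_add', ← log_mul two_ne_zero (by positivity)]
    exact log_le_log (mod_cast (show 0 < n by omega))
      (mod_cast (show n ≤ 2 * (2 * cSeq n + 1) by unfold cSeq; omega))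
  have hlog_c : log (2 * cSeq n) ≤ log n :=
    log_le_log (mod_cast (show 0 < 2 * cSeq n by omega)) (mod_cast (show 2 * cSeq n ≤ n by omega))
  have hk := mul_le_mul_of_nonneg_left hlog_c1 (by positivity : (0 : ℝ) ≤ aSeq n + bSeq n)
  have hn_log : n * log 2 = (aSeq n + bSeq n) * log 2 + 2 * cSeq n * log 2 := by
    rw [← hsumR]; ring
  constructor <;> linarith

theorem abs_log_multinomialSeq_sub_le :
    ∀ᶠ n in atTop, |log (multinomialSeq n) - (n * log 2 + 2 * log n ^ 2 / log 2)| ≤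
      10 * log n + aSeq n * log (aSeq n) + bSeq n * log (bSeq n) := by
  filter_upwards [log_multinomialSeq_bounds,
    (tendsto_log_atTop.comp tendsto_natCast_atTop_atTop).eventually_ge_atTop 1]
    with n ⟨lower, upper⟩ (hL : 1 ≤ log n)
  obtain ⟨hk, hk'⟩ := abs_le.1 (abs_aSeq_add_bSeq_sub_le n)
  have hlog2 : 0 < log 2 := log_pos one_lt_two
  have hlog2' : log 2 < 3 / 4 := by linarith [log_two_lt_d9]
  have hq : log n / log 2 * log 2 = log n := div_mul_cancel₀ _ hlog2.ne'
  have hsq : 2 * log n ^ 2 / log 2 = 2 * (log n / log 2) * log n := by ring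
  have h1 := mul_le_mul_of_nonneg_right hk' (by linarith : 0 ≤ log n)
  have h2 := mul_le_mul_of_nonneg_right hk (by linarith : 0 ≤ log n)
  have h3 := mul_le_mul_of_nonneg_right hk' hlog2.le
  have h4 : 0 ≤ (aSeq n + bSeq n : ℝ) * log 2 := by positivity
  rw [abs_le, hsq]
  constructor <;> linarith

/-- `log C(n; a_n, b_n, c_n, d_n) = n log 2 + 2 log² n / log 2 + o(log² n)`. -/
theorem log_multinomial_asymptotic :
    (fun n : ℕ => Real.log (multinomialSeq n) -
        (n * Real.log 2 + 2 * Real.log n ^ 2 / Real.log 2))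
      =o[Filter.atTop] fun n : ℕ => Real.log n ^ 2 := by
  have hlog := tendsto_log_atTop.comp (tendsto_natCast_atTop_atTop (R := ℝ))
  have hlog_sq : (fun n : ℕ => log n) =o[atTop] fun n => log n ^ 2 :=
    ((isLittleO_pow_pow_atTop_of_lt one_lt_two).comp_tendsto hlog).congr_left fun _ => pow_one _
  have hbound := ((hlog_sq.const_mul_left 10).add
    (isBigO_aSeq.isLittleO_mul_log_sq (tendsto_natCast_atTop_atTop.comp tendsto_aSeq))).add
    (isBigO_bSeq.isLittleO_mul_log_sq (tendsto_natCast_atTop_atTop.comp tendsto_bSeq))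
  refine IsBigO.trans_isLittleO (IsBigO.of_bound' ?_) hbound
  filter_upwards [abs_log_multinomialSeq_sub_le] with n hn
  exact hn.trans (le_abs_self _)
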